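/- Let σ ∈ S_k satisfy σ(i) ≤ i+1 for all i. If 1 ≤ i-j-1, σ(i) ≤ i, σ(i-j-1) ≤ i-j-1, and σ(m) = m+1 for all m with i-j ≤ m ≤ i-1, then σ(i) = i-j. -/

import Mathlib

/-!
The indices `m ≤ a - j - 1` form an initial segment that `σ` maps into itself (every index
below the last one moves up by at most one, and the last one is standard), so, `σ` being a
permutation of a finite set, it maps the complement into itself as well: `σ a ≥ a - j`.
On the other hand the non-standard indices `a - j, …, a - 1` already take the values
`a - j + 1, …, a`, so by injectivity `σ a ≤ a` cannot be one of them: `σ a ≤ a - j`.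
-/

theorem Equiv.Perm.mem_of_apply_mem_of_mapsTo {α : Type*} [Finite α] (σ : Equiv.Perm α)
    {s : Set α} (hs : Set.MapsTo σ s s) {x : α} (hx : σ x ∈ s) : x ∈ s := by
  obtain ⟨y, hy, hyx⟩ := ((s.toFinite.injOn_iff_bijOn_of_mapsTo hs).mp σ.injective.injOn).surjOn hx
  exact σ.injective hyx ▸ hy

section LowerHessenberg

variable {k : ℕ} (σ : Equiv.Perm (Fin k))

theorem mapsTo_le_of_apply_le_succ (hσ : ∀ i : Fin k, (σ i : ℕ) ≤ (i : ℕ) + 1) {n : ℕ}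
    (hn : ∀ m : Fin k, (m : ℕ) = n → (σ m : ℕ) ≤ (m : ℕ)) :
    Set.MapsTo σ {m | (m : ℕ) ≤ n} {m | (m : ℕ) ≤ n} := by
  intro m (hm : (m : ℕ) ≤ n)
  show (σ m : ℕ) ≤ n
  rcases hm.lt_or_eq with hlt | heq
  · exact (hσ m).trans hlt
  · exact heq ▸ hn m heq

theorem lt_apply_of_apply_le_succ (hσ : ∀ i : Fin k, (σ i : ℕ) ≤ (i : ℕ) + 1) {a : Fin k} {n : ℕ}
    (hna : n < a) (hn : ∀ m : Fin k, (m : ℕ) = n → (σ m : ℕ) ≤ (m : ℕ)) :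
    n < (σ a : ℕ) := by
  by_contra! h
  have : (a : ℕ) ≤ n := σ.mem_of_apply_mem_of_mapsTo (mapsTo_le_of_apply_le_succ σ hσ hn) h
  omega

theorem apply_le_of_apply_eq_succ {a : Fin k} {b : ℕ} (ha : (σ a : ℕ) ≤ (a : ℕ))
    (hmid : ∀ m : Fin k, b ≤ (m : ℕ) → (m : ℕ) ≤ (a : ℕ) - 1 → (σ m : ℕ) = (m : ℕ) + 1) :
    (σ a : ℕ) ≤ b := by
  by_contra! h
  let m : Fin k := ⟨(σ a : ℕ) - 1, by omega⟩
  have hm : (σ m : ℕ) = σ a := by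
    rw [hmid m (by simp only [m]; omega) (by simp only [m]; omega)]
    simp only [m]
    omega
  have : (m : ℕ) = a := congrArg Fin.val (σ.injective (Fin.ext hm))
  simp only [m] at this
  omega

end LowerHessenberg

theorem stmt4 (k : ℕ) (σ : Equiv.Perm (Fin k))
    (hσ : ∀ i : Fin k, (σ i : ℕ) ≤ (i : ℕ) + 1)
    (a : Fin k) (j : ℕ)
    (ha : (σ a : ℕ) ≤ (a : ℕ))
    (hprev : ∀ m : Fin k, (m : ℕ) = (a : ℕ) - j - 1 → (σ m : ℕ) ≤ (m : ℕ))
    (hmid : ∀ m : Fin k, (a : ℕ) - j ≤ (m : ℕ) → (m : ℕ) ≤ (a : ℕ) - 1 →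
      (σ m : ℕ) = (m : ℕ) + 1) :
    (σ a : ℕ) = (a : ℕ) - j := by
  have hupper := apply_le_of_apply_eq_succ σ ha hmid
  by_cases hzero : (a : ℕ) - j = 0
  · omega
  have hlower := lt_apply_of_apply_le_succ σ hσ (a := a) (n := (a : ℕ) - j - 1) (by omega) hprev
  omega
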